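/- The Cantor set C and the set C# are forward invariant under the renormalization map with equality: R(C) = C and R(C#) = C#. -/

import Mathlib

/-!
`C` is the attractor of the similarities `σ_d x = d + φ⁻³ x` (with `φ⁻³ = 2φ - 3`) for the
digits `d ∈ {0, 4 - 2φ, 2φ - 2}`, and `C ⊆ [0, φ]`, so the pieces `σ_d(C) ⊆ [d, d + 2 - φ]` are
separated by gaps of length at least `5φ - 8`. On these pieces `R` undoes the similarities:
`R ∘ σ_0 = R ∘ σ_{4-2φ} = id` and `R ∘ σ_{2φ-2} = σ_0` on `[0, φ]`, the right ends `2 - φ` and `φ`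
of the outer pieces being caught by the second and fifth branch of `R`. Hence `R(C) ⊆ C`, with
equality thanks to the middle piece.

A point of `C` is an endpoint of a complementary component iff `C` misses a one-sided
neighbourhood of it. Near `σ_d x` the set `C` coincides with `σ_d(C)`, and the increasing
affine map `σ_d` preserves one-sided gaps, so `σ_d x` is an endpoint iff `x` is. Therefore `R`
preserves and reflects endpoints on `C`, and `R(C♯) = C♯`.
-/

open Set

noncomputable section

/-- The golden ratio `(1+√5)/2`. -/
def gold : ℝ := (1 + Real.sqrt 5) / 2

/-- The renormalization map `R` on `[0,2)`. -/
def Rmap (y : ℝ) : ℝ :=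
  if y < 2 - gold then gold ^ 3 * y
  else if y < 4 - 2 * gold then y + 2 * gold - 2
  else if y < 2 * gold - 2 then gold ^ 3 * y - 2 * gold
  else if y < gold then y - 2 * gold + 2
  else gold ^ 3 * y - 4 * gold

/-- The Cantor set `C`: sums `Σ a_k φ^(-3k)` with digits `a_k ∈ {0, 4-2φ, 2φ-2}`. -/
def cantorC : Set ℝ :=
  {x | ∃ a : ℕ → ℝ, (∀ k, a k = 0 ∨ a k = 4 - 2 * gold ∨ a k = 2 * gold - 2) ∧
    x = ∑' k : ℕ, a k * (gold ^ (3 * k))⁻¹}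

/-- The endpoints of the connected components of `ℝ ∖ C`. -/
def cantorEndpoints : Set ℝ :=
  {x | ∃ y : ℝ, y ∉ cantorC ∧ x ∈ closure (connectedComponentIn cantorCᶜ y)}

/-- `C♯`: the Cantor set minus the endpoints of complementary components. -/
def cantorCsharp : Set ℝ := cantorC \ cantorEndpoints

open Filter Topology

section Gaps

variable {α β : Type*}

def BordersGap [TopologicalSpace α] [LinearOrder α] (S : Set α) (x : α) : Prop :=
  (∀ᶠ w in 𝓝[>] x, w ∉ S) ∨ ∀ᶠ w in 𝓝[<] x, w ∉ S

lemma IsPreconnected.Ioo_subset_of_mem_closure_of_mem [TopologicalSpace α] [LinearOrder α]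
    [OrderClosedTopology α] {U : Set α} (hU : IsPreconnected U) {a b : α} (ha : a ∈ closure U)
    (hb : b ∈ U) : Ioo a b ⊆ U := by
  intro w hw
  obtain ⟨u, hwu, hu⟩ := mem_closure_iff.1 ha (Iio w) isOpen_Iio hw.1
  exact hU.Icc_subset hu hb ⟨le_of_lt hwu, hw.2.le⟩

lemma IsPreconnected.Ioo_subset_of_mem_of_mem_closure [TopologicalSpace α] [LinearOrder α]
    [OrderClosedTopology α] {U : Set α} (hU : IsPreconnected U) {a b : α} (ha : a ∈ U)
    (hb : b ∈ closure U) : Ioo a b ⊆ U := by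
  intro w hw
  obtain ⟨u, hwu, hu⟩ := mem_closure_iff.1 hb (Ioi w) isOpen_Ioi hw.2
  exact hU.Icc_subset ha hu ⟨hw.1.le, le_of_lt hwu⟩

lemma bordersGap_of_mem_closure_connectedComponentIn [TopologicalSpace α] [LinearOrder α]
    [OrderClosedTopology α] {S : Set α} {x y : α} (hx : x ∈ S)
    (hy : y ∉ S) (hcl : x ∈ closure (connectedComponentIn Sᶜ y)) : BordersGap S x := by
  have hU := isPreconnected_connectedComponentIn (x := y) (F := Sᶜ)
  have hyU := mem_connectedComponentIn (x := y) (F := Sᶜ) hy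
  have hUS : connectedComponentIn Sᶜ y ⊆ Sᶜ := connectedComponentIn_subset _ _
  rcases lt_or_gt_of_ne (ne_of_mem_of_not_mem hx hy) with hxy | hyx
  · exact .inl <| mem_of_superset (Ioo_mem_nhdsGT hxy)
      ((hU.Ioo_subset_of_mem_closure_of_mem hcl hyU).trans hUS)
  · exact .inr <| mem_of_superset (Ioo_mem_nhdsLT hyx)
      ((hU.Ioo_subset_of_mem_of_mem_closure hyU hcl).trans hUS)

lemma BordersGap.exists_mem_closure_connectedComponentIn [ConditionallyCompleteLinearOrder α]
    [TopologicalSpace α] [OrderTopology α] [DenselyOrdered α] [NoMaxOrder α]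
    [NoMinOrder α] {S : Set α} {x : α} (h : BordersGap S x) :
    ∃ y ∉ S, x ∈ closure (connectedComponentIn Sᶜ y) := by
  rcases h with h | h
  · obtain ⟨u, hxu, hsub⟩ := mem_nhdsGT_iff_exists_Ioo_subset.1 h
    obtain ⟨y, hy⟩ := nonempty_Ioo.2 hxu
    refine ⟨y, hsub hy, closure_mono (isPreconnected_Ioo.subset_connectedComponentIn hy hsub) ?_⟩
    rw [closure_Ioo hxu.ne]
    exact left_mem_Icc.2 hxu.le
  · obtain ⟨u, hux, hsub⟩ := mem_nhdsLT_iff_exists_Ioo_subset.1 h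
    obtain ⟨y, hy⟩ := nonempty_Ioo.2 hux
    refine ⟨y, hsub hy, closure_mono (isPreconnected_Ioo.subset_connectedComponentIn hy hsub) ?_⟩
    rw [closure_Ioo hux.ne]
    exact right_mem_Icc.2 hux.le

lemma bordersGap_iff_exists_mem_closure_connectedComponentIn [ConditionallyCompleteLinearOrder α]
    [TopologicalSpace α] [OrderTopology α] [DenselyOrdered α] [NoMaxOrder α]
    [NoMinOrder α] {S : Set α} {x : α} (hx : x ∈ S) :
    BordersGap S x ↔ ∃ y ∉ S, x ∈ closure (connectedComponentIn Sᶜ y) :=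
  ⟨BordersGap.exists_mem_closure_connectedComponentIn,
    fun ⟨_, hy, hcl⟩ => bordersGap_of_mem_closure_connectedComponentIn hx hy hcl⟩

lemma bordersGap_congr [TopologicalSpace α] [LinearOrder α] {S T : Set α} {x : α}
    (h : S =ᶠ[𝓝 x] T) : BordersGap S x ↔ BordersGap T x := by
  have key : ∀ l ≤ 𝓝 x, (∀ᶠ w in l, w ∉ S) ↔ ∀ᶠ w in l, w ∉ T := fun l hl =>
    eventually_congr <| ((eventuallyEq_set.1 h).filter_mono hl).mono fun _ hw => not_congr hw
  exact or_congr (key _ nhdsWithin_le_nhds) (key _ nhdsWithin_le_nhds)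

lemma OrderIso.bordersGap_image_iff [LinearOrder α] [TopologicalSpace α] [OrderTopology α]
    [LinearOrder β] [TopologicalSpace β] [OrderTopology β] (e : α ≃o β) {S : Set α} {x : α} :
    BordersGap (e '' S) (e x) ↔ BordersGap S x := by
  have key : ∀ s : Set α, (∀ᶠ w in 𝓝[e '' s] e x, w ∉ e '' S) ↔ ∀ᶠ w in 𝓝[s] x, w ∉ S := by
    intro s
    have hmap := e.toHomeomorph.isEmbedding.map_nhdsWithin_eq s x
    rw [coe_toHomeomorph] at hmap
    rw [← hmap, eventually_map]
    simp only [e.injective.mem_set_image]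
  rw [BordersGap, BordersGap, ← e.image_Ioi, ← e.image_Iio, key, key]

end Gaps

section DigitSeries

def digitSeries (D : Set ℝ) (r : ℝ) : Set ℝ :=
  {x | ∃ a : ℕ → ℝ, (∀ k, a k ∈ D) ∧ x = ∑' k, a k * r ^ k}

variable {D : Set ℝ} {r M : ℝ}

lemma summable_digit_mul_pow (hD : D ⊆ Icc 0 M) (hr₀ : 0 ≤ r) (hr₁ : r < 1) {a : ℕ → ℝ}
    (ha : ∀ k, a k ∈ D) : Summable fun k => a k * r ^ k :=
  .of_nonneg_of_le (fun k => mul_nonneg (hD (ha k)).1 (pow_nonneg hr₀ k))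
    (fun k => mul_le_mul_of_nonneg_right (hD (ha k)).2 (pow_nonneg hr₀ k))
    ((summable_geometric_of_lt_one hr₀ hr₁).mul_left M)

lemma digitSeries_subset_Icc (hD : D ⊆ Icc 0 M) (hr₀ : 0 ≤ r) (hr₁ : r < 1) :
    digitSeries D r ⊆ Icc 0 (M / (1 - r)) := by
  rintro _ ⟨a, ha, rfl⟩
  refine ⟨tsum_nonneg fun k => mul_nonneg (hD (ha k)).1 (pow_nonneg hr₀ k), ?_⟩
  calc ∑' k, a k * r ^ k ≤ ∑' k, M * r ^ k :=
        (summable_digit_mul_pow hD hr₀ hr₁ ha).tsum_le_tsum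
          (fun k => mul_le_mul_of_nonneg_right (hD (ha k)).2 (pow_nonneg hr₀ k))
          ((summable_geometric_of_lt_one hr₀ hr₁).mul_left M)
    _ = M / (1 - r) := by rw [tsum_mul_left, tsum_geometric_of_lt_one hr₀ hr₁, div_eq_mul_inv]

lemma digitSeries_eq_biUnion (hD : D ⊆ Icc 0 M) (hr₀ : 0 ≤ r) (hr₁ : r < 1) :
    digitSeries D r = ⋃ d ∈ D, (fun x => d + r * x) '' digitSeries D r := by
  have split : ∀ a : ℕ → ℝ, (∀ k, a k ∈ D) →
      ∑' k, a k * r ^ k = a 0 + r * ∑' k, a (k + 1) * r ^ k := fun a ha => by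
    rw [(summable_digit_mul_pow hD hr₀ hr₁ ha).tsum_eq_zero_add, ← tsum_mul_left]
    simp only [pow_zero, mul_one, pow_succ]
    congr 1
    exact tsum_congr fun k => by ring
  ext x
  simp only [mem_iUnion, mem_image]
  constructor
  · rintro ⟨a, ha, rfl⟩
    exact ⟨a 0, ha 0, _, ⟨fun k => a (k + 1), fun k => ha (k + 1), rfl⟩, (split a ha).symm⟩
  · rintro ⟨d, hd, _, ⟨b, hb, rfl⟩, rfl⟩
    have ha : ∀ k, (Nat.casesOn k d b : ℝ) ∈ D := fun k => by cases k <;> simp [hd, hb]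
    exact ⟨fun k => Nat.casesOn k d b, ha, (split _ ha).symm⟩

end DigitSeries

lemma gold_sq : gold ^ 2 = gold + 1 := Real.goldenRatio_sq

lemma gold_pow_three : gold ^ 3 = 2 * gold + 1 := by linear_combination (gold + 1) * gold_sq

lemma eight_fifths_lt_gold : 8 / 5 < gold := by
  have : (11 / 5 : ℝ) < Real.sqrt 5 := by rw [Real.lt_sqrt] <;> norm_num
  unfold gold; linarith

lemma gold_lt_five_thirds : gold < 5 / 3 := by
  have : Real.sqrt 5 < 7 / 3 := by rw [Real.sqrt_lt'] <;> norm_num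
  unfold gold; linarith

lemma two_mul_gold_sub_three_mem_Ioo : 2 * gold - 3 ∈ Ioo 0 1 :=
  ⟨by linarith [eight_fifths_lt_gold], by linarith [gold_lt_five_thirds]⟩

lemma inv_gold_pow_three : (gold ^ 3)⁻¹ = 2 * gold - 3 :=
  inv_eq_of_mul_eq_one_right (by linear_combination (2 * gold ^ 2 - gold + 1) * gold_sq)

def cantorDigits : Set ℝ := {0, 4 - 2 * gold, 2 * gold - 2}

def cantorMap (d x : ℝ) : ℝ := d + (2 * gold - 3) * x

lemma cantorDigits_subset_Icc : cantorDigits ⊆ Icc 0 (2 * gold - 2) := by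
  have := eight_fifths_lt_gold
  have := gold_lt_five_thirds
  rintro d (rfl | rfl | rfl) <;> constructor <;> linarith

lemma cantorC_eq_digitSeries : cantorC = digitSeries cantorDigits (2 * gold - 3) := by
  have hpow : ∀ k : ℕ, (gold ^ (3 * k))⁻¹ = (2 * gold - 3) ^ k := fun k => by
    rw [pow_mul, ← inv_pow, inv_gold_pow_three]
  simp only [cantorC, digitSeries, hpow]
  rfl

lemma cantorC_eq_biUnion : cantorC = ⋃ d ∈ cantorDigits, cantorMap d '' cantorC := by
  rw [cantorC_eq_digitSeries]
  exact digitSeries_eq_biUnion cantorDigits_subset_Icc two_mul_gold_sub_three_mem_Ioo.1.le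
    two_mul_gold_sub_three_mem_Ioo.2

lemma cantorC_subset_Icc : cantorC ⊆ Icc 0 gold := by
  have h := digitSeries_subset_Icc cantorDigits_subset_Icc two_mul_gold_sub_three_mem_Ioo.1.le
    two_mul_gold_sub_three_mem_Ioo.2
  have hφ : (2 * gold - 2) / (1 - (2 * gold - 3)) = gold := by
    rw [div_eq_iff (by linarith [gold_lt_five_thirds])]
    linear_combination 2 * gold_sq
  rwa [hφ, ← cantorC_eq_digitSeries] at h

lemma mem_cantorC_iff {y : ℝ} :
    y ∈ cantorC ↔ ∃ d ∈ cantorDigits, ∃ x ∈ cantorC, cantorMap d x = y := by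
  conv_lhs => rw [cantorC_eq_biUnion]
  simp only [mem_iUnion, mem_image, exists_prop]

lemma cantorMap_mem_cantorC {d x : ℝ} (hd : d ∈ cantorDigits) (hx : x ∈ cantorC) :
    cantorMap d x ∈ cantorC :=
  mem_cantorC_iff.2 ⟨d, hd, x, hx, rfl⟩

lemma cantorMap_mem_Icc {d x : ℝ} (hx : x ∈ Icc 0 gold) :
    cantorMap d x ∈ Icc d (d + (2 - gold)) := by
  have hr := two_mul_gold_sub_three_mem_Ioo.1
  have hrφ : (2 * gold - 3) * gold = 2 - gold := by linear_combination 2 * gold_sq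
  exact ⟨by unfold cantorMap; nlinarith [hx.1], by unfold cantorMap; nlinarith [hx.2]⟩

lemma eq_of_dist_cantorMap_lt {d e x w : ℝ} (hd : d ∈ cantorDigits) (he : e ∈ cantorDigits)
    (hx : x ∈ Icc 0 gold) (hw : w ∈ Icc 0 gold)
    (h : dist (cantorMap d x) (cantorMap e w) < 5 * gold - 8) : d = e := by
  obtain ⟨hx₀, hx₁⟩ := cantorMap_mem_Icc (d := d) hx
  obtain ⟨hw₀, hw₁⟩ := cantorMap_mem_Icc (d := e) hw
  rw [Real.dist_eq, abs_lt] at h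
  have := eight_fifths_lt_gold
  have := gold_lt_five_thirds
  rcases hd with rfl | rfl | rfl <;> rcases he with rfl | rfl | rfl <;>
    first | rfl | (exfalso; linarith)

lemma cantorC_eventuallyEq_image_cantorMap {d x : ℝ} (hd : d ∈ cantorDigits) (hx : x ∈ cantorC) :
    cantorC =ᶠ[𝓝 (cantorMap d x)] cantorMap d '' cantorC := by
  have hgap : (0 : ℝ) < 5 * gold - 8 := by linarith [eight_fifths_lt_gold]
  refine eventuallyEq_set.2 ?_
  filter_upwards [Metric.ball_mem_nhds _ hgap] with y hy
  refine ⟨fun hyC => ?_, fun ⟨w, hw, hwy⟩ => hwy ▸ cantorMap_mem_cantorC hd hw⟩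
  obtain ⟨e, he, w, hw, rfl⟩ := mem_cantorC_iff.1 hyC
  obtain rfl := eq_of_dist_cantorMap_lt he hd (cantorC_subset_Icc hw) (cantorC_subset_Icc hx) hy
  exact mem_image_of_mem _ hw

lemma cantorMap_mem_cantorEndpoints_iff {d x : ℝ} (hd : d ∈ cantorDigits) (hx : x ∈ cantorC) :
    cantorMap d x ∈ cantorEndpoints ↔ x ∈ cantorEndpoints := by
  have he : ⇑((OrderIso.mulLeft₀ _ two_mul_gold_sub_three_mem_Ioo.1).trans (OrderIso.addLeft d)) = cantorMap d := rfl
  rw [cantorEndpoints, mem_ofPred_eq, mem_ofPred_eq,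
    ← bordersGap_iff_exists_mem_closure_connectedComponentIn hx,
    ← bordersGap_iff_exists_mem_closure_connectedComponentIn (cantorMap_mem_cantorC hd hx),
    bordersGap_congr (cantorC_eventuallyEq_image_cantorMap hd hx), ← he,
    OrderIso.bordersGap_image_iff]

lemma cantorMap_gold (d : ℝ) : cantorMap d gold = d + (2 - gold) := by
  unfold cantorMap; linear_combination 2 * gold_sq

lemma cantorMap_lt_of_lt_gold {d x : ℝ} (hx : x < gold) : cantorMap d x < d + (2 - gold) := by
  rw [← cantorMap_gold]
  unfold cantorMap
  nlinarith [eight_fifths_lt_gold]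

lemma Rmap_cantorMap_zero {x : ℝ} (hx : x ∈ Icc 0 gold) : Rmap (cantorMap 0 x) = x := by
  rcases hx.2.lt_or_eq with hlt | rfl
  · rw [Rmap, if_pos (by simpa using cantorMap_lt_of_lt_gold (d := 0) hlt), cantorMap]
    linear_combination (2 * gold - 3) * x * gold_pow_three + 4 * x * gold_sq
  · rw [cantorMap_gold, Rmap, if_neg (by simp), if_pos (by linarith [gold_lt_five_thirds])]
    ring

lemma Rmap_cantorMap_mid {x : ℝ} (hx : x ∈ Icc 0 gold) :
    Rmap (cantorMap (4 - 2 * gold) x) = x := by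
  obtain ⟨h₀, h₁⟩ := cantorMap_mem_Icc (d := 4 - 2 * gold) hx
  have := eight_fifths_lt_gold
  have := gold_lt_five_thirds
  rw [Rmap, if_neg (by linarith), if_neg (by linarith), if_pos (by linarith), cantorMap]
  linear_combination (4 - 2 * gold + (2 * gold - 3) * x) * gold_pow_three + (4 * x - 4) * gold_sq

lemma Rmap_cantorMap_last {x : ℝ} (hx : x ∈ Icc 0 gold) :
    Rmap (cantorMap (2 * gold - 2) x) = cantorMap 0 x := by
  obtain ⟨h₀, h₁⟩ := cantorMap_mem_Icc (d := 2 * gold - 2) hx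
  have := eight_fifths_lt_gold
  have := gold_lt_five_thirds
  rcases hx.2.lt_or_eq with hlt | rfl
  · have := cantorMap_lt_of_lt_gold (d := 2 * gold - 2) hlt
    rw [Rmap, if_neg (by linarith), if_neg (by linarith), if_neg (by linarith),
      if_pos (by linarith), cantorMap, cantorMap]
    ring
  · rw [cantorMap_gold, cantorMap_gold, Rmap, if_neg (by linarith), if_neg (by linarith),
      if_neg (by linarith), if_neg (by linarith)]
    linear_combination gold * gold_pow_three + 2 * gold_sq

lemma Rmap_cantorMap {d x : ℝ} (hd : d ∈ cantorDigits) (hx : x ∈ Icc 0 gold) :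
    Rmap (cantorMap d x) = x ∨ Rmap (cantorMap d x) = cantorMap 0 x := by
  rcases hd with rfl | rfl | rfl
  exacts [.inl (Rmap_cantorMap_zero hx), .inl (Rmap_cantorMap_mid hx),
    .inr (Rmap_cantorMap_last hx)]

lemma Rmap_mapsTo_cantorC : MapsTo Rmap cantorC cantorC := by
  intro y hy
  obtain ⟨d, hd, x, hx, rfl⟩ := mem_cantorC_iff.1 hy
  rcases Rmap_cantorMap hd (cantorC_subset_Icc hx) with h | h <;> rw [h]
  exacts [hx, cantorMap_mem_cantorC (.inl rfl) hx]

lemma Rmap_mem_cantorEndpoints_iff {y : ℝ} (hy : y ∈ cantorC) :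
    Rmap y ∈ cantorEndpoints ↔ y ∈ cantorEndpoints := by
  obtain ⟨d, hd, x, hx, rfl⟩ := mem_cantorC_iff.1 hy
  rw [cantorMap_mem_cantorEndpoints_iff hd hx]
  rcases Rmap_cantorMap hd (cantorC_subset_Icc hx) with h | h <;> rw [h]
  exact cantorMap_mem_cantorEndpoints_iff (.inl rfl) hx

lemma Rmap_mapsTo_cantorCsharp : MapsTo Rmap cantorCsharp cantorCsharp :=
  fun _ ⟨hyC, hyE⟩ => ⟨Rmap_mapsTo_cantorC hyC, (Rmap_mem_cantorEndpoints_iff hyC).not.2 hyE⟩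

lemma Rmap_surjOn_cantorC : SurjOn Rmap cantorC cantorC := fun _ hx =>
  ⟨_, cantorMap_mem_cantorC (.inr (.inl rfl)) hx, Rmap_cantorMap_mid (cantorC_subset_Icc hx)⟩

lemma Rmap_surjOn_cantorCsharp : SurjOn Rmap cantorCsharp cantorCsharp := fun _ ⟨hxC, hxE⟩ =>
  ⟨_, ⟨cantorMap_mem_cantorC (.inr (.inl rfl)) hxC,
      (cantorMap_mem_cantorEndpoints_iff (.inr (.inl rfl)) hxC).not.2 hxE⟩,
    Rmap_cantorMap_mid (cantorC_subset_Icc hxC)⟩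

/-- The Cantor set `C` and the set `C♯` are invariant under `R` with equality. -/
theorem Rmap_invariance_of_cantor :
    Rmap '' cantorC = cantorC ∧ Rmap '' cantorCsharp = cantorCsharp :=
  ⟨Rmap_surjOn_cantorC.image_eq_of_mapsTo Rmap_mapsTo_cantorC,
    Rmap_surjOn_cantorCsharp.image_eq_of_mapsTo Rmap_mapsTo_cantorCsharp⟩
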